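/- arXiv:1409.5320 — 2 statements merged into one kernel-verified Lean document; each statement's English description precedes it below -/
import Mathlib

section
/- In the small-deadband limit, the average TCL power P_o = Pm·T_ON/(T_ON + T_OFF) converges to a(θa − θr)/b as Δ → 0⁺. That is, letting T_ON(Δ) and T_OFF(Δ) denote the ON and OFF durations as functions of the deadband Δ, the limit of Pm·T_ON(Δ)/(T_ON(Δ) + T_OFF(Δ)) as Δ tends to 0 from above equals a(θa − θr)/b. -/
open Filter Topology

lemma tcl_key_log_limit (x : ℝ) (hx : 0 < x) :
    Tendsto (fun Δ => Real.log ((x + Δ) / (x - Δ)) / Δ) (𝓝[>] (0:ℝ)) (𝓝 (2 / x)) := by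
  have hne : x ≠ 0 := ne_of_gt hx
  have h1 : HasDerivAt (fun Δ : ℝ => Real.log (x + Δ)) (1 / x) 0 := by
    have := (Real.hasDerivAt_log (by simpa using hne : x + (0:ℝ) ≠ 0)).comp 0
      ((hasDerivAt_id (0:ℝ)).const_add x)
    simpa [one_div, Function.comp_def] using this
  have h2 : HasDerivAt (fun Δ : ℝ => Real.log (x - Δ)) (-(1 / x)) 0 := by
    have := (Real.hasDerivAt_log (by simpa using hne : x - (0:ℝ) ≠ 0)).comp 0
      ((hasDerivAt_id (0:ℝ)).const_sub x)
    simpa [one_div, Function.comp_def] using this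
  have hd : HasDerivAt (fun Δ : ℝ => Real.log (x + Δ) - Real.log (x - Δ)) (2 / x) 0 := by
    have := h1.sub h2
    rw [show (2:ℝ) / x = 1 / x - -(1 / x) by ring]
    exact this
  rw [hasDerivAt_iff_tendsto_slope] at hd
  have hmono : 𝓝[>] (0:ℝ) ≤ 𝓝[≠] (0:ℝ) :=
    nhdsWithin_mono 0 (fun y hy => ne_of_gt hy)
  have htend := hd.mono_left hmono
  refine htend.congr' ?_
  filter_upwards [Ioo_mem_nhdsGT_of_mem (Set.mem_Ico.2 ⟨le_refl (0:ℝ), hx⟩)] with Δ hΔ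
  obtain ⟨hΔ0, hΔx⟩ := hΔ
  have hxp : (0:ℝ) < x + Δ := by linarith
  have hxm : (0:ℝ) < x - Δ := by linarith
  have hlog : Real.log ((x + Δ) / (x - Δ)) = Real.log (x + Δ) - Real.log (x - Δ) :=
    Real.log_div (ne_of_gt hxp) (ne_of_gt hxm)
  have hslope : slope (fun Δ : ℝ => Real.log (x + Δ) - Real.log (x - Δ)) 0 Δ
      = (Real.log (x + Δ) - Real.log (x - Δ)) / Δ := by
    simp [slope_def_field]
  rw [hslope, hlog]

lemma tcl_alg_aux (a b Pm x1 x2 : ℝ) (ha : 0 < a) (hb : 0 < b) (hPm : 0 < Pm)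
    (hx1 : 0 < x1) (hx2 : 0 < x2) (h : x1 + x2 = b * Pm / a) :
    Pm * (1 / a * (2 / x1)) / (1 / a * (2 / x1) + 1 / a * (2 / x2)) = a * x2 / b := by
  have hPmeq : Pm = a * (x1 + x2) / b := by
    rw [h]; field_simp
  rw [hPmeq]
  have ha' := ne_of_gt ha
  have hb' := ne_of_gt hb
  have hx1' := ne_of_gt hx1
  have hx2' := ne_of_gt hx2
  have hden : 1 / a * (2 / x1) + 1 / a * (2 / x2) = 2 * (x1 + x2) / (a * x1 * x2) := by
    field_simp; ring
  rw [hden]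
  have hsum : x1 + x2 ≠ 0 := by positivity
  field_simp

theorem tcl_average_power_small_deadband_limit
    (a b Pm θa θr : ℝ) (ha : 0 < a) (hb : 0 < b) (hPm : 0 < Pm)
    (h1 : θr < θa) (h2 : θa < θr + b * Pm / a)
    (T_ON T_OFF : ℝ → ℝ)
    (hTON : ∀ Δ, T_ON Δ =
      (1 / a) * Real.log ((θr + Δ - θa + b * Pm / a) / (θr - Δ - θa + b * Pm / a)))
    (hTOFF : ∀ Δ, T_OFF Δ = (1 / a) * Real.log ((θa - θr + Δ) / (θa - θr - Δ))) :
    Tendsto (fun Δ => Pm * T_ON Δ / (T_ON Δ + T_OFF Δ)) (𝓝[>] 0)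
      (𝓝 (a * (θa - θr) / b)) := by
  have hx1 : 0 < θr - θa + b * Pm / a := by linarith
  have hx2 : 0 < θa - θr := by linarith
  have hu : Tendsto (fun Δ => T_ON Δ / Δ) (𝓝[>] (0:ℝ))
      (𝓝 ((1 / a) * (2 / (θr - θa + b * Pm / a)))) := by
    have := (tcl_key_log_limit _ hx1).const_mul (1 / a)
    refine this.congr (fun Δ => ?_)
    rw [hTON]
    have e1 : θr + Δ - θa + b * Pm / a = (θr - θa + b * Pm / a) + Δ := by ring
    have e2 : θr - Δ - θa + b * Pm / a = (θr - θa + b * Pm / a) - Δ := by ring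
    rw [e1, e2]; ring
  have hv : Tendsto (fun Δ => T_OFF Δ / Δ) (𝓝[>] (0:ℝ))
      (𝓝 ((1 / a) * (2 / (θa - θr)))) := by
    have := (tcl_key_log_limit _ hx2).const_mul (1 / a)
    refine this.congr (fun Δ => ?_)
    rw [hTOFF]; ring
  have hden_ne : (1 / a) * (2 / (θr - θa + b * Pm / a)) + (1 / a) * (2 / (θa - θr)) ≠ 0 := by
    positivity
  have hmain := (hu.const_mul Pm).div (hu.add hv) hden_ne
  have heq := tcl_alg_aux a b Pm (θr - θa + b * Pm / a) (θa - θr) ha hb hPm hx1 hx2 (by ring)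
  rw [← heq]
  refine hmain.congr' ?_
  filter_upwards [self_mem_nhdsWithin] with Δ hΔ
  have hΔ0 : Δ ≠ 0 := ne_of_gt hΔ
  simp only [Pi.div_apply]
  rcases eq_or_ne (T_ON Δ + T_OFF Δ) 0 with h0 | h0
  · have : T_ON Δ / Δ + T_OFF Δ / Δ = 0 := by rw [← add_div, h0, zero_div]
    rw [this, h0, div_zero, div_zero]
  · rw [← add_div]
    field_simp
end

section
/- Generalized battery sets add under Minkowski summation: for parameter tuples φ₁ = (C₁, n₋₁, n₊₁, α) and φ₂ = (C₂, n₋₂, n₊₂, α) with the same dissipation rate α, the Minkowski sum B(φ₁) + B(φ₂) is contained in B(C₁ + C₂, n₋₁ + n₋₂, n₊₁ + n₊₂, α). -/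
noncomputable def soc (α : ℝ) (u : ℝ → ℝ) (t : ℝ) : ℝ :=
  -∫ s in (0:ℝ)..t, Real.exp (-α * (t - s)) * u s

def Battery (C nm np α : ℝ) : Set (ℝ → ℝ) :=
  {u | Continuous u ∧ (∀ t ≥ 0, -nm ≤ u t ∧ u t ≤ np) ∧ ∀ t ≥ 0, |soc α u t| ≤ C}

lemma soc_add (α : ℝ) (u₁ u₂ : ℝ → ℝ) (h₁ : Continuous u₁) (h₂ : Continuous u₂) (t : ℝ) :
    soc α (fun s => u₁ s + u₂ s) t = soc α u₁ t + soc α u₂ t := by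
  unfold soc
  rw [← neg_add, ← intervalIntegral.integral_add]
  · congr 1
    apply intervalIntegral.integral_congr
    intro s _
    ring
  · exact (Continuous.mul (by continuity) h₁).intervalIntegrable _ _
  · exact (Continuous.mul (by continuity) h₂).intervalIntegrable _ _

theorem battery_minkowski_sum (C₁ C₂ nm₁ nm₂ np₁ np₂ α : ℝ)
    (hC₁ : 0 ≤ C₁) (hC₂ : 0 ≤ C₂) (hnm₁ : 0 ≤ nm₁) (hnm₂ : 0 ≤ nm₂)
    (hnp₁ : 0 ≤ np₁) (hnp₂ : 0 ≤ np₂) (hα : 0 ≤ α) :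
    {u : ℝ → ℝ | ∃ u₁ ∈ Battery C₁ nm₁ np₁ α, ∃ u₂ ∈ Battery C₂ nm₂ np₂ α,
        u = fun t => u₁ t + u₂ t} ⊆
      Battery (C₁ + C₂) (nm₁ + nm₂) (np₁ + np₂) α := by
  rintro u ⟨u₁, ⟨hc₁, hb₁, hs₁⟩, u₂, ⟨hc₂, hb₂, hs₂⟩, rfl⟩
  refine ⟨hc₁.add hc₂, fun t ht => ?_, fun t ht => ?_⟩
  · obtain ⟨a1, a2⟩ := hb₁ t ht
    obtain ⟨b1, b2⟩ := hb₂ t ht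
    constructor
    · rw [neg_add]; exact add_le_add a1 b1
    · exact add_le_add a2 b2
  · rw [soc_add α u₁ u₂ hc₁ hc₂ t]
    exact (abs_add_le _ _).trans (add_le_add (hs₁ t ht) (hs₂ t ht))
end
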